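/- In the poset Δ⁺ of positive roots of type A_n with n ≥ 3, the 𝔛-orbit of the antichain {α₁} has cardinality 2n + 2 (which equals twice the Coxeter number h = n + 1); i.e., 𝔛^{2n+2}({α₁}) = {α₁} and 𝔛^m({α₁}) ≠ {α₁} for 1 ≤ m < 2n + 2. -/
import Mathlib


open Finset

/-- The root order on pairs: `(i,j) ≼ (i',j')` iff `i' ≤ i` and `j ≤ j'`. -/
def rle (p q : ℕ × ℕ) : Prop := q.1 ≤ p.1 ∧ p.2 ≤ q.2

instance : DecidableRel rle := fun p q =>
  inferInstanceAs (Decidable (q.1 ≤ p.1 ∧ p.2 ≤ q.2))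

/-- The positive roots of type `A_n`, modelled as pairs `(i,j)` with `1 ≤ i ≤ j ≤ n`. -/
def roots (n : ℕ) : Finset (ℕ × ℕ) :=
  ((Finset.Icc 1 n) ×ˢ (Finset.Icc 1 n)).filter (fun p => p.1 ≤ p.2)

/-- `Γ` is an antichain in `Δ⁺(A_n)`: a set of pairwise incomparable positive roots. -/
def IsAC (n : ℕ) (Γ : Finset (ℕ × ℕ)) : Prop :=
  Γ ⊆ roots n ∧ ∀ p ∈ Γ, ∀ q ∈ Γ, rle p q → p = q

/-- The upper ideal `I(Γ) = {x ∈ Δ⁺ : ∃ γ ∈ Γ, γ ≼ x}` generated by `Γ`. -/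
def upIdeal (n : ℕ) (Γ : Finset (ℕ × ℕ)) : Finset (ℕ × ℕ) :=
  (roots n).filter (fun x => ∃ γ ∈ Γ, rle γ x)

/-- The set of maximal elements of `S` with respect to the root order. -/
def maxOf (S : Finset (ℕ × ℕ)) : Finset (ℕ × ℕ) :=
  S.filter (fun x => ∀ y ∈ S, rle x y → y = x)

/-- The set of minimal elements of `S` with respect to the root order. -/
def minOf (S : Finset (ℕ × ℕ)) : Finset (ℕ × ℕ) :=
  S.filter (fun x => ∀ y ∈ S, rle y x → y = x)

/-- The reverse operator `𝔛`, sending an antichain `Γ` to the set of maximal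
elements of `Δ⁺ \ I(Γ)`. -/
def Xrev (n : ℕ) (Γ : Finset (ℕ × ℕ)) : Finset (ℕ × ℕ) :=
  maxOf (roots n \ upIdeal n Γ)

/-- `r_Γ(γ) = #(I(Γ) \ {γ})_min − #I(Γ)_min + 1`. -/
def rGam (n : ℕ) (Γ : Finset (ℕ × ℕ)) (γ : ℕ × ℕ) : ℤ :=
  ((minOf (upIdeal n Γ \ {γ})).card : ℤ) - ((minOf (upIdeal n Γ)).card : ℤ) + 1

/-- The OY-number `𝒴(Γ) = Σ_{γ ∈ Γ} r_Γ(γ)`; in particular `𝒴(∅) = 0`. -/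
def OY (n : ℕ) (Γ : Finset (ℕ × ℕ)) : ℤ := ∑ γ ∈ Γ, rGam n Γ γ

lemma mem_roots' {n i j : ℕ} : (i,j) ∈ roots n ↔ 1 ≤ i ∧ i ≤ j ∧ j ≤ n := by
  simp [roots, Finset.mem_filter, Finset.mem_product]; omega

lemma mem_upIdeal {n : ℕ} {Γ : Finset (ℕ × ℕ)} {x : ℕ × ℕ} :
    x ∈ upIdeal n Γ ↔ x ∈ roots n ∧ ∃ γ ∈ Γ, rle γ x := by
  simp [upIdeal]

lemma Xrev_subset {n : ℕ} {Γ : Finset (ℕ × ℕ)} : Xrev n Γ ⊆ roots n := by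
  intro x hx
  simp only [Xrev, maxOf, mem_filter, mem_sdiff] at hx
  exact hx.1.1

lemma mem_Xrev {n : ℕ} {Γ : Finset (ℕ × ℕ)} {i j : ℕ} :
    (i,j) ∈ Xrev n Γ ↔ (i,j) ∈ roots n ∧ (i,j) ∉ upIdeal n Γ ∧
      (i = 1 ∨ (i-1, j) ∈ upIdeal n Γ) ∧ (j = n ∨ (i, j+1) ∈ upIdeal n Γ) := by
  simp only [Xrev, maxOf, mem_filter, mem_sdiff]
  constructor
  · rintro ⟨⟨hr, hni⟩, hmax⟩
    have hb := mem_roots'.1 hr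
    refine ⟨hr, hni, ?_, ?_⟩
    · by_cases h1 : i = 1
      · exact Or.inl h1
      · right
        by_contra hI
        have hr' : (i-1,j) ∈ roots n := by rw [mem_roots']; omega
        have := hmax (i-1,j) ⟨hr', hI⟩ ⟨by omega, le_refl _⟩
        have : i - 1 = i := congrArg Prod.fst this
        omega
    · by_cases h1 : j = n
      · exact Or.inl h1
      · right
        by_contra hI
        have hr' : (i,j+1) ∈ roots n := by rw [mem_roots']; omega
        have := hmax (i,j+1) ⟨hr', hI⟩ ⟨le_refl _, by omega⟩
        have : j + 1 = j := congrArg Prod.snd this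
        omega
  · rintro ⟨hr, hni, h1, h2⟩
    have hb := mem_roots'.1 hr
    refine ⟨⟨hr, hni⟩, ?_⟩
    rintro ⟨a,b⟩ ⟨hyr, hyni⟩ ⟨hai, hjb⟩
    have hyb := mem_roots'.1 hyr
    by_contra hne
    have hab : a < i ∨ j < b := by
      rcases Nat.lt_or_ge a i with h | h
      · exact Or.inl h
      · right
        rcases Nat.lt_or_ge j b with h' | h'
        · exact h'
        · exfalso
          apply hne
          have h1 : a = i := by omega
          have h2 : b = j := by omega
          simp [h1, h2]
    rcases hab with h | h
    · have hI : (i-1,j) ∈ upIdeal n Γ := by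
        rcases h1 with h1 | h1
        · omega
        · exact h1
      obtain ⟨_, γ, hγ, hγ1, hγ2⟩ := mem_upIdeal.1 hI
      exact hyni (mem_upIdeal.2 ⟨hyr, γ, hγ, by simp at hγ1 hγ2 ⊢; omega, by simp at hγ1 hγ2 ⊢; omega⟩)
    · have hI : (i,j+1) ∈ upIdeal n Γ := by
        rcases h2 with h2 | h2
        · omega
        · exact h2
      obtain ⟨_, γ, hγ, hγ1, hγ2⟩ := mem_upIdeal.1 hI
      exact hyni (mem_upIdeal.2 ⟨hyr, γ, hγ, by simp at hγ1 hγ2 ⊢; omega, by simp at hγ1 hγ2 ⊢; omega⟩)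

def B (n m : ℕ) : Finset (ℕ × ℕ) :=
  (Finset.Ico 1 m).image (fun k => (k, k + (n - m))) ∪ {(m+1, n)}

lemma mem_upIdeal_B {n m : ℕ} (hm : 1 ≤ m) (hmn : m + 1 ≤ n) {i j : ℕ} :
    (i,j) ∈ upIdeal n (B n m) ↔
      (1 ≤ i ∧ i ≤ j ∧ j ≤ n) ∧ ((i < m ∧ i + (n - m) ≤ j) ∨ (i ≤ m + 1 ∧ j = n)) := by
  rw [mem_upIdeal, mem_roots']
  simp only [B, mem_union, mem_image, mem_Ico, mem_singleton, rle, Prod.ext_iff, Prod.exists]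
  constructor
  · rintro ⟨hb, a, b, (⟨k, hk, rfl, rfl⟩ | ⟨rfl, rfl⟩), h1, h2⟩
    · exact ⟨hb, Or.inl (by omega)⟩
    · exact ⟨hb, Or.inr (by omega)⟩
  · rintro ⟨hb, h | h⟩
    · exact ⟨hb, i, i + (n-m), Or.inl ⟨i, ⟨by omega, h.1⟩, rfl, rfl⟩, le_refl _, h.2⟩
    · exact ⟨hb, m+1, n, Or.inr ⟨rfl, rfl⟩, by omega, by omega⟩

lemma step0 {n : ℕ} (hn : 2 ≤ n) :
    Xrev n ({((1:ℕ),(1:ℕ))} : Finset (ℕ × ℕ)) = {(2, n)} := by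
  ext ⟨i,j⟩
  rw [mem_Xrev]
  simp only [mem_upIdeal, mem_roots', mem_singleton, rle, Prod.ext_iff, Prod.exists,
    exists_eq_left, exists_and_left, exists_eq_left', mem_singleton]
  constructor
  · rintro ⟨hb, hni, h1, h2⟩
    simp only [not_and, not_exists] at hni
    have key : ¬ i ≤ 1 := fun h => hni hb 1 1 ⟨rfl, rfl⟩ h (by omega)
    constructor
    · rcases h1 with h1 | ⟨hb1, a, b, ⟨rfl, rfl⟩, hr1, hr2⟩
      · omega
      · omega
    · rcases h2 with h2 | ⟨hb2, a, b, ⟨rfl, rfl⟩, hr1, hr2⟩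
      · exact h2
      · omega
  · rintro ⟨rfl, rfl⟩
    refine ⟨⟨by omega, by omega, le_refl _⟩, ?_, ?_, Or.inl rfl⟩
    · rintro ⟨hb, a, b, ⟨rfl, rfl⟩, hr1, hr2⟩
      omega
    · right
      exact ⟨⟨by omega, by omega, by omega⟩, 1, 1, ⟨rfl, rfl⟩, by omega, by omega⟩

lemma mem_B {n m i j : ℕ} :
    ((i,j) ∈ B n m) ↔ (1 ≤ i ∧ i + 1 ≤ m ∧ j = i + (n - m)) ∨ (i = m + 1 ∧ j = n) := by
  simp only [B, mem_union, mem_image, mem_Ico, mem_singleton, Prod.ext_iff, Prod.exists]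
  constructor
  · rintro (⟨k, hk, rfl, rfl⟩ | ⟨rfl, rfl⟩)
    · exact Or.inl ⟨by omega, by omega, rfl⟩
    · exact Or.inr ⟨rfl, rfl⟩
  · rintro (⟨h1, h2, rfl⟩ | ⟨rfl, rfl⟩)
    · exact Or.inl ⟨i, ⟨h1, by omega⟩, rfl, rfl⟩
    · exact Or.inr ⟨rfl, rfl⟩

lemma stepB {n m : ℕ} (hm : 1 ≤ m) (hmn : m + 2 ≤ n) :
    Xrev n (B n m) = B n (m+1) := by
  ext ⟨i,j⟩
  rw [mem_Xrev, mem_B, mem_roots']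
  simp only [mem_upIdeal_B hm (by omega : m + 1 ≤ n)]
  omega

/-- The diagonal antichain `{(k,k) : 1 ≤ k ≤ n-1}`. -/
def D (n : ℕ) : Finset (ℕ × ℕ) := (Finset.Ico 1 n).image (fun k => (k, k))

lemma mem_D {n i j : ℕ} : (i,j) ∈ D n ↔ 1 ≤ i ∧ i < n ∧ j = i := by
  simp only [D, mem_image, mem_Ico, Prod.ext_iff, Prod.exists]
  constructor
  · rintro ⟨k, hk, rfl, rfl⟩
    exact ⟨hk.1, hk.2, rfl⟩
  · rintro ⟨h1, h2, rfl⟩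
    exact ⟨j, ⟨h1, h2⟩, rfl, rfl⟩

lemma mem_upIdeal_D {n i j : ℕ} (hn : 1 ≤ n) :
    (i,j) ∈ upIdeal n (D n) ↔ (1 ≤ i ∧ i ≤ j ∧ j ≤ n) ∧ i < n := by
  rw [mem_upIdeal, mem_roots']
  constructor
  · rintro ⟨hb, γ, hγ, hr1, hr2⟩
    rw [show γ = (γ.1, γ.2) from rfl, mem_D] at hγ
    exact ⟨hb, by omega⟩
  · rintro ⟨hb, h⟩
    exact ⟨hb, (i, i), mem_D.2 ⟨by omega, h, rfl⟩, le_refl _, by omega⟩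

lemma stepPre {n : ℕ} (hn : 3 ≤ n) : Xrev n (B n (n-1)) = D n := by
  ext ⟨i,j⟩
  rw [mem_Xrev, mem_D, mem_roots']
  simp only [mem_upIdeal_B (show 1 ≤ n-1 by omega) (show (n-1) + 1 ≤ n by omega)]
  omega

lemma stepD {n : ℕ} (hn : 2 ≤ n) : Xrev n (D n) = {(n, n)} := by
  ext ⟨i,j⟩
  rw [mem_Xrev, mem_roots', mem_singleton]
  simp only [mem_upIdeal_D (show 1 ≤ n by omega), Prod.ext_iff]
  omega

/-- The order automorphism `(i,j) ↦ (n+1-j, n+1-i)` of `Δ⁺(A_n)`. -/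
def sig (n : ℕ) (p : ℕ × ℕ) : ℕ × ℕ := (n + 1 - p.2, n + 1 - p.1)

lemma sig_mem_roots {n : ℕ} {p : ℕ × ℕ} (hp : p ∈ roots n) : sig n p ∈ roots n := by
  obtain ⟨i, j⟩ := p
  rw [mem_roots'] at hp
  rw [show sig n (i,j) = (n+1-j, n+1-i) from rfl, mem_roots']
  omega

lemma sig_sig {n : ℕ} {p : ℕ × ℕ} (hp : p ∈ roots n) : sig n (sig n p) = p := by
  obtain ⟨i, j⟩ := p
  rw [mem_roots'] at hp
  simp only [sig, Prod.ext_iff]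
  omega

lemma rle_sig {n : ℕ} {p q : ℕ × ℕ} (hp : p ∈ roots n) (hq : q ∈ roots n) :
    rle (sig n p) (sig n q) ↔ rle p q := by
  obtain ⟨i, j⟩ := p; obtain ⟨a, b⟩ := q
  rw [mem_roots'] at hp hq
  simp only [sig, rle]
  omega

lemma up_sig {n : ℕ} {Γ : Finset (ℕ × ℕ)} (hΓ : Γ ⊆ roots n) {z : ℕ × ℕ} (hz : z ∈ roots n) :
    z ∈ upIdeal n (Γ.image (sig n)) ↔ sig n z ∈ upIdeal n Γ := by
  rw [mem_upIdeal, mem_upIdeal]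
  constructor
  · rintro ⟨-, γ, hγ, hr⟩
    obtain ⟨δ, hδ, rfl⟩ := mem_image.1 hγ
    refine ⟨sig_mem_roots hz, δ, hδ, ?_⟩
    have h2 : rle (sig n (sig n δ)) (sig n z) :=
      (rle_sig (sig_mem_roots (hΓ hδ)) hz).2 hr
    rwa [sig_sig (hΓ hδ)] at h2
  · rintro ⟨-, γ, hγ, hr⟩
    refine ⟨hz, sig n γ, mem_image_of_mem _ hγ, ?_⟩
    have h2 : rle (sig n γ) (sig n (sig n z)) :=
      (rle_sig (hΓ hγ) (sig_mem_roots hz)).2 hr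
    rwa [sig_sig hz] at h2

lemma Xrev_subset' {n : ℕ} {Γ : Finset (ℕ × ℕ)} : Xrev n Γ ⊆ roots n := by
  intro x hx
  simp only [Xrev, maxOf, mem_filter, mem_sdiff] at hx
  exact hx.1.1

lemma Xrev_sig {n : ℕ} {Γ : Finset (ℕ × ℕ)} (hΓ : Γ ⊆ roots n) :
    Xrev n (Γ.image (sig n)) = (Xrev n Γ).image (sig n) := by
  ext x
  by_cases hx : x ∈ roots n
  · have lhs : x ∈ Xrev n (Γ.image (sig n)) ↔ sig n x ∈ Xrev n Γ := by
      simp only [Xrev, maxOf, mem_filter, mem_sdiff]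
      constructor
      · rintro ⟨⟨-, hni⟩, hmax⟩
        refine ⟨⟨sig_mem_roots hx, fun h => hni ((up_sig hΓ hx).2 h)⟩, ?_⟩
        rintro z ⟨hzr, hzni⟩ hrle
        have hyni : sig n z ∉ upIdeal n (Γ.image (sig n)) := by
          intro h
          rw [up_sig hΓ (sig_mem_roots hzr), sig_sig hzr] at h
          exact hzni h
        have hrle' : rle x (sig n z) := by
          apply (rle_sig hx (sig_mem_roots hzr)).1
          rwa [sig_sig hzr]
        have := hmax (sig n z) ⟨sig_mem_roots hzr, hyni⟩ hrle'
        rw [← this, sig_sig hzr]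
      · rintro ⟨⟨-, hni⟩, hmax⟩
        refine ⟨⟨hx, fun h => hni ((up_sig hΓ hx).1 h)⟩, ?_⟩
        rintro y ⟨hyr, hyni⟩ hrle
        have hzni : sig n y ∉ upIdeal n Γ := by
          intro h
          exact hyni ((up_sig hΓ hyr).2 h)
        have hrle' : rle (sig n x) (sig n y) := (rle_sig hx hyr).2 hrle
        have := hmax (sig n y) ⟨sig_mem_roots hyr, hzni⟩ hrle'
        have h2 := congrArg (sig n) this
        rwa [sig_sig hyr, sig_sig hx] at h2
    rw [lhs, mem_image]
    constructor
    · intro h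
      exact ⟨sig n x, h, sig_sig hx⟩
    · rintro ⟨y, hy, rfl⟩
      rwa [sig_sig (Xrev_subset' hy)]
  · constructor
    · intro h
      exact absurd (Xrev_subset' h) hx
    · intro h
      obtain ⟨y, hy, rfl⟩ := mem_image.1 h
      exact absurd (sig_mem_roots (Xrev_subset' hy)) hx

lemma iter_sig {n : ℕ} (t : ℕ) {Γ : Finset (ℕ × ℕ)} (hΓ : Γ ⊆ roots n) :
    (Xrev n)^[t] (Γ.image (sig n)) = ((Xrev n)^[t] Γ).image (sig n) := by
  induction t generalizing Γ with
  | zero => simp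
  | succ t ih =>
    rw [Function.iterate_succ_apply, Function.iterate_succ_apply, Xrev_sig hΓ,
      ih Xrev_subset']

lemma orbit_B {n : ℕ} (hn : 3 ≤ n) : ∀ m, 1 ≤ m → m ≤ n - 1 →
    (Xrev n)^[m] ({((1:ℕ),(1:ℕ))} : Finset (ℕ × ℕ)) = B n m := by
  intro m
  induction m with
  | zero => intro h; omega
  | succ m ih =>
    intro h1 h2
    by_cases hm : m = 0
    · subst hm
      rw [Function.iterate_one, step0 (by omega)]
      simp [B]
    · rw [Function.iterate_succ_apply', ih (by omega) (by omega),
        stepB (by omega) (by omega)]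

lemma orbit_n {n : ℕ} (hn : 3 ≤ n) :
    (Xrev n)^[n] ({((1:ℕ),(1:ℕ))} : Finset (ℕ × ℕ)) = D n := by
  have h : (Xrev n)^[(n-1)+1] ({((1:ℕ),(1:ℕ))} : Finset (ℕ × ℕ))
      = Xrev n ((Xrev n)^[n-1] ({((1:ℕ),(1:ℕ))} : Finset (ℕ × ℕ))) :=
    Function.iterate_succ_apply' _ _ _
  rw [orbit_B hn (n-1) (by omega) (le_refl _), stepPre hn,
    show n - 1 + 1 = n by omega] at h
  exact h

lemma orbit_n1 {n : ℕ} (hn : 3 ≤ n) :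
    (Xrev n)^[n+1] ({((1:ℕ),(1:ℕ))} : Finset (ℕ × ℕ)) = {(n, n)} := by
  rw [Function.iterate_succ_apply', orbit_n hn, stepD (by omega)]

lemma one_subset {n : ℕ} (hn : 3 ≤ n) :
    ({((1:ℕ),(1:ℕ))} : Finset (ℕ × ℕ)) ⊆ roots n := by
  intro x hx
  rw [mem_singleton] at hx
  subst hx
  rw [mem_roots']
  omega

lemma nn_image {n : ℕ} (hn : 3 ≤ n) :
    ({((n:ℕ),(n:ℕ))} : Finset (ℕ × ℕ))
      = ({((1:ℕ),(1:ℕ))} : Finset (ℕ × ℕ)).image (sig n) := by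
  rw [image_singleton]
  simp [sig]

lemma orbit_shift {n : ℕ} (hn : 3 ≤ n) (t : ℕ) :
    (Xrev n)^[t + (n+1)] ({((1:ℕ),(1:ℕ))} : Finset (ℕ × ℕ))
      = ((Xrev n)^[t] ({((1:ℕ),(1:ℕ))} : Finset (ℕ × ℕ))).image (sig n) := by
  rw [Function.iterate_add_apply, orbit_n1 hn, nn_image hn, iter_sig t (one_subset hn)]

/-- In `Δ⁺(A_n)` with `n ≥ 3`, the `𝔛`-orbit of the antichain `{α₁}` has
cardinality `2n + 2 = 2h`: `𝔛^{2n+2}({α₁}) = {α₁}` and `𝔛^m({α₁}) ≠ {α₁}`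
for `1 ≤ m < 2n + 2`. -/
theorem stmt11 (n : ℕ) (hn : 3 ≤ n) :
    (Xrev n)^[2 * n + 2] ({((1 : ℕ), (1 : ℕ))} : Finset (ℕ × ℕ))
      = ({((1 : ℕ), (1 : ℕ))} : Finset (ℕ × ℕ)) ∧
    ∀ m, 1 ≤ m → m < 2 * n + 2 →
      (Xrev n)^[m] ({((1 : ℕ), (1 : ℕ))} : Finset (ℕ × ℕ))
        ≠ ({((1 : ℕ), (1 : ℕ))} : Finset (ℕ × ℕ)) := by
  constructor
  · rw [show 2 * n + 2 = (n+1) + (n+1) by omega, orbit_shift hn (n+1), orbit_n1 hn,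
      image_singleton]
    congr 1
    simp only [sig, Prod.ext_iff]
    constructor <;> omega
  · intro m h1 h2 heq
    by_cases hA : m ≤ n - 1
    · rw [orbit_B hn m h1 hA] at heq
      have hx : ((m+1 : ℕ), n) ∈ B n m := mem_B.2 (Or.inr ⟨rfl, rfl⟩)
      rw [heq, mem_singleton, Prod.ext_iff] at hx
      simp at hx
      omega
    · by_cases hB : m = n
      · rw [hB, orbit_n hn] at heq
        have hx : ((2:ℕ), (2:ℕ)) ∈ D n := mem_D.2 ⟨by omega, by omega, rfl⟩
        rw [heq, mem_singleton, Prod.ext_iff] at hx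
        simp at hx
      · by_cases hC : m = n + 1
        · rw [hC, orbit_n1 hn] at heq
          have hx : ((n:ℕ), (n:ℕ)) ∈ ({((1:ℕ),(1:ℕ))} : Finset (ℕ×ℕ)) := by
            rw [← heq]; exact mem_singleton_self _
          rw [mem_singleton, Prod.ext_iff] at hx
          simp at hx
          omega
        · -- n + 2 ≤ m ≤ 2n + 1
          obtain ⟨t, rfl⟩ : ∃ t, m = t + (n+1) := ⟨m - (n+1), by omega⟩
          have htb : 1 ≤ t ∧ t ≤ n := by omega
          rw [orbit_shift hn t] at heq
          have key : ∀ x ∈ (Xrev n)^[t] ({((1:ℕ),(1:ℕ))} : Finset (ℕ×ℕ)),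
              sig n x = (1, 1) := by
            intro x hx
            have := mem_image_of_mem (sig n) hx
            rw [heq, mem_singleton] at this
            exact this
          by_cases hT : t ≤ n - 1
          · by_cases hT2 : t ≤ n - 2
            · have hx : ((t+1 : ℕ), n) ∈ B n t := mem_B.2 (Or.inr ⟨rfl, rfl⟩)
              rw [← orbit_B hn t htb.1 hT] at hx
              have := key _ hx
              simp only [sig, Prod.ext_iff] at this
              omega
            · have hteq : t = n - 1 := by omega
              have hx : ((1 : ℕ), 1 + (n - t)) ∈ B n t :=
                mem_B.2 (Or.inl ⟨le_refl _, by omega, rfl⟩)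
              rw [← orbit_B hn t htb.1 hT] at hx
              have := key _ hx
              simp only [sig, Prod.ext_iff] at this
              omega
          · have hteq : t = n := by omega
            have hx : ((1 : ℕ), (1 : ℕ)) ∈ (Xrev n)^[t] ({((1:ℕ),(1:ℕ))} : Finset (ℕ×ℕ)) := by
              rw [hteq, orbit_n hn]
              exact mem_D.2 ⟨le_refl _, by omega, rfl⟩
            have := key _ hx
            simp only [sig, Prod.ext_iff] at this
            omega
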